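/- If both players play the crossout strategy on a dinner D of n morsels, they eat the morsels in exactly the reverse order of the crossout sequence: the morsel eaten on turn i is m_{n+1−i}. In particular, Bob's last bite is Alice's least favourite morsel m_1. -/

import Mathlib

open Finset

/-- One step of the crossout process: at Alice's steps remove the remaining morsel of
minimal first coordinate, at Bob's steps the one of minimal second coordinate. -/
noncomputable def coAux (turnA : Bool) (D : Finset (ℝ × ℝ)) : List (ℝ × ℝ) :=
  if h : D.Nonempty then
    (if turnA then (Finset.exists_min_image D Prod.fst h).choose
      else (Finset.exists_min_image D Prod.snd h).choose) ::
      coAux (!turnA)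
        (D.erase (if turnA then (Finset.exists_min_image D Prod.fst h).choose
          else (Finset.exists_min_image D Prod.snd h).choose))
  else []
termination_by D.card
decreasing_by
  apply Finset.card_erase_lt_of_mem
  split
  · exact (Finset.exists_min_image D Prod.fst h).choose_spec.1
  · exact (Finset.exists_min_image D Prod.snd h).choose_spec.1

/-- The crossout sequence of a dinner, as a list `[m₁, m₂, …, mₙ]`. -/
noncomputable def crossoutList (D : Finset (ℝ × ℝ)) : List (ℝ × ℝ) := coAux true D

/-- `crossout D i` is the `i`-th morsel `mᵢ` (1-indexed) of the crossout sequence of `D`. -/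
noncomputable def crossout (D : Finset (ℝ × ℝ)) (i : ℕ) : ℝ × ℝ :=
  (crossoutList D).getD (i - 1) (0, 0)

/-- Totally ordered preferences: distinct morsels have distinct first coordinates and
distinct second coordinates. -/
def TotallyOrderedPrefs (D : Finset (ℝ × ℝ)) : Prop :=
  (∀ p ∈ D, ∀ q ∈ D, p.1 = q.1 → p = q) ∧ (∀ p ∈ D, ∀ q ∈ D, p.2 = q.2 → p = q)

/-- Alice's crossout score: sum of first coordinates of the even-indexed crossout morsels. -/
noncomputable def chiA (D : Finset (ℝ × ℝ)) : ℝ :=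
  ∑ i ∈ Finset.Icc 1 D.card, if Even i then (crossout D i).1 else 0

/-- Bob's crossout score: sum of second coordinates of the odd-indexed crossout morsels. -/
noncomputable def chiB (D : Finset (ℝ × ℝ)) : ℝ :=
  ∑ i ∈ Finset.Icc 1 D.card, if Odd i then (crossout D i).2 else 0
/-- The crossout strategy: eat the last morsel of the crossout sequence. -/
noncomputable def crossoutStrategy (D : Finset (ℝ × ℝ)) : ℝ × ℝ := crossout D D.card

/-!
The crossout sequence is stable under truncation: for distinct coordinates, the crossout
sequence of `{m₁, …, mₖ}` is `m₁, …, mₖ` itself. Indeed `m₁` is the minimum of `D` in the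
first coordinate, hence also the unique minimum of any subdinner containing it, and the
remaining steps are the crossout of `D − m₁` with the roles exchanged, so induction applies.
Consequently the crossout strategy on `{m₁, …, mₖ}` eats `mₖ`.
-/

/-- The coordinate minimised at a crossout step: the first one at Alice's steps (`true`),
the second one at Bob's. -/
def crossoutKey (b : Bool) : ℝ × ℝ → ℝ := if b then Prod.fst else Prod.snd

noncomputable def crossoutPick (b : Bool) (D : Finset (ℝ × ℝ)) (h : D.Nonempty) : ℝ × ℝ :=
  (D.exists_min_image (crossoutKey b) h).choose

lemma crossoutPick_mem (b : Bool) (D : Finset (ℝ × ℝ)) (h : D.Nonempty) :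
    crossoutPick b D h ∈ D :=
  (D.exists_min_image (crossoutKey b) h).choose_spec.1

lemma crossoutKey_pick_le (b : Bool) {D : Finset (ℝ × ℝ)} (h : D.Nonempty) {x : ℝ × ℝ}
    (hx : x ∈ D) : crossoutKey b (crossoutPick b D h) ≤ crossoutKey b x :=
  (D.exists_min_image (crossoutKey b) h).choose_spec.2 x hx

lemma crossoutPick_eq_of_isMin (b : Bool) {D : Finset (ℝ × ℝ)} (h : D.Nonempty)
    (hinj : Set.InjOn (crossoutKey b) D) {m : ℝ × ℝ} (hm : m ∈ D)
    (hmin : ∀ x ∈ D, crossoutKey b m ≤ crossoutKey b x) : crossoutPick b D h = m :=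
  hinj (crossoutPick_mem b D h) hm
    ((crossoutKey_pick_le b h hm).antisymm (hmin _ (crossoutPick_mem b D h)))

lemma coAux_def (b : Bool) (D : Finset (ℝ × ℝ)) :
    coAux b D = if h : D.Nonempty then
      crossoutPick b D h :: coAux (!b) (D.erase (crossoutPick b D h)) else [] := by
  rw [coAux]; cases b <;> rfl

@[simp]
lemma coAux_empty (b : Bool) : coAux b ∅ = [] := by
  simp [coAux_def b ∅]

lemma coAux_of_nonempty (b : Bool) {D : Finset (ℝ × ℝ)} (h : D.Nonempty) :
    coAux b D = crossoutPick b D h :: coAux (!b) (D.erase (crossoutPick b D h)) := by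
  rw [coAux_def, dif_pos h]

@[simp]
lemma mem_coAux {b : Bool} {D : Finset (ℝ × ℝ)} {x : ℝ × ℝ} : x ∈ coAux b D ↔ x ∈ D := by
  induction D using Finset.strongInduction generalizing b with
  | _ D ih =>
    rcases D.eq_empty_or_nonempty with rfl | h
    · simp
    rw [coAux_of_nonempty b h, List.mem_cons, ih _ (Finset.erase_ssubset (crossoutPick_mem b D h)),
      Finset.mem_erase]
    by_cases hx : x = crossoutPick b D h
    · simp [hx, crossoutPick_mem]
    · simp [hx]

lemma nodup_coAux (b : Bool) (D : Finset (ℝ × ℝ)) : (coAux b D).Nodup := by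
  induction D using Finset.strongInduction generalizing b with
  | _ D ih =>
    rcases D.eq_empty_or_nonempty with rfl | h
    · simp
    rw [coAux_of_nonempty b h]
    exact List.nodup_cons.2 ⟨by simp, ih _ (Finset.erase_ssubset (crossoutPick_mem b D h)) _⟩

lemma length_coAux (b : Bool) (D : Finset (ℝ × ℝ)) : (coAux b D).length = D.card := by
  rw [← List.toFinset_card_of_nodup (nodup_coAux b D)]
  congr 1
  ext x
  simp

lemma TotallyOrderedPrefs.mono {D E : Finset (ℝ × ℝ)} (hD : TotallyOrderedPrefs D)
    (hE : E ⊆ D) : TotallyOrderedPrefs E :=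
  ⟨fun p hp q hq => hD.1 p (hE hp) q (hE hq), fun p hp q hq => hD.2 p (hE hp) q (hE hq)⟩

lemma TotallyOrderedPrefs.injOn_crossoutKey {D : Finset (ℝ × ℝ)} (hD : TotallyOrderedPrefs D)
    (b : Bool) : Set.InjOn (crossoutKey b) D := by
  intro p hp q hq
  cases b
  · exact hD.2 p hp q hq
  · exact hD.1 p hp q hq

lemma coAux_take_toFinset {D : Finset (ℝ × ℝ)} (hD : TotallyOrderedPrefs D) (b : Bool)
    (k : ℕ) : coAux b ((coAux b D).take k).toFinset = (coAux b D).take k := by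
  induction D using Finset.strongInduction generalizing b k with
  | _ D ih =>
    rcases D.eq_empty_or_nonempty with rfl | h
    · simp
    obtain _ | j := k
    · simp
    set m := crossoutPick b D h
    set L := coAux (!b) (D.erase m)
    have hL : ∀ x ∈ (L.take j).toFinset, x ∈ D.erase m := fun x hx =>
      mem_coAux.1 (List.mem_of_mem_take (List.mem_toFinset.1 hx))
    have hm : m ∈ D := crossoutPick_mem b D h
    have hsub : insert m (L.take j).toFinset ⊆ D :=
      Finset.insert_subset hm fun x hx => Finset.mem_of_mem_erase (hL x hx)
    have hpick : crossoutPick b _ (Finset.insert_nonempty m (L.take j).toFinset) = m :=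
      crossoutPick_eq_of_isMin b _ ((hD.mono hsub).injOn_crossoutKey b)
        (Finset.mem_insert_self _ _) fun x hx => crossoutKey_pick_le b h (hsub hx)
    have hm_notMem : m ∉ (L.take j).toFinset := fun hmL => Finset.notMem_erase m D (hL m hmL)
    rw [coAux_of_nonempty b h, List.take_succ_cons, List.toFinset_cons,
      coAux_of_nonempty b (Finset.insert_nonempty _ _), hpick, Finset.erase_insert hm_notMem,
      ih _ (Finset.erase_ssubset hm) (hD.mono (Finset.erase_subset m D))]

lemma crossout_one {D : Finset (ℝ × ℝ)} (h : D.Nonempty) :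
    crossout D 1 = crossoutPick true D h := by
  rw [crossout, crossoutList, coAux_of_nonempty true h]
  rfl

/-- Under mutual crossout play the morsels are eaten in reverse order of the crossout
sequence: after m_n, …, m_{k+1} are eaten, the remaining dinner is {m_1, …, m_k} and
the crossout strategy eats m_k from it.  In particular the last bite,
taken by Bob, is m_1, Alice's least favourite morsel of D. -/
theorem crossout_play_reverse (D : Finset (ℝ × ℝ)) (hD : TotallyOrderedPrefs D) :
    (∀ k : ℕ, 1 ≤ k → k ≤ D.card →
      crossoutStrategy (((crossoutList D).take k).toFinset) = crossout D k) ∧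
    (D.Nonempty → crossout D 1 ∈ D ∧ ∀ m ∈ D, (crossout D 1).1 ≤ m.1) := by
  refine ⟨fun k hk hkD => ?_, fun h => ?_⟩
  · have hlen : (crossoutList D).length = D.card := length_coAux true D
    have hprefix : crossoutList ((crossoutList D).take k).toFinset = (crossoutList D).take k :=
      coAux_take_toFinset hD true k
    have hcard : ((crossoutList D).take k).toFinset.card = k := by
      rw [← length_coAux true, ← crossoutList, hprefix, List.length_take]
      omega
    rw [crossoutStrategy, hcard, crossout, crossout, hprefix,
      List.getD_eq_getElem _ _ (by simp; omega), List.getD_eq_getElem _ _ (by omega),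
      List.getElem_take]
  · rw [crossout_one h]
    exact ⟨crossoutPick_mem true D h, fun m hm => crossoutKey_pick_le true h hm⟩
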